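/- Let γ ∈ (−2,0), ν ∈ (0,2), and let β satisfy assumption (H). For every real k ≥ 2 there exists a constant C = C(k,γ,ν,K₁) > 0 such that for all v, v_* ∈ ℝ³ with v ≠ v_*: | ∫₀^∞ ∫₀^{2π} Δ̃(|·|^k)(v,v_*,z,φ) dφ dz | ≤ C (|v|^k + |v_*|^k + 1), where |·|^k denotes the function w ↦ |w|^k on ℝ³. -/

import Mathlib

/-!
Taylor's formula bounds `Δ̃(|·|^k)(v, v₊, z, φ)` by `k (k-1) (|v| + |c|)^(k-2) |c|²`, and the
collision vector satisfies `|c| ≤ 2 min(1, θ) |v - v₊|` with `θ = G_ν(z / |v - v₊|^γ)`.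
The upper bound in (H) gives `G_ν(z) ≤ (K₁ / (ν z))^(1/ν)`, so `min(1, θ)² ≤ min(1, (T/z)^(2/ν))`
with `T = K₁ |v - v₊|^γ / ν`; since `2/ν > 1` this is integrable on `(0, ∞)`, with integral
`2T / (2 - ν)`. The resulting factor `|v - v₊|^(2+γ)` is at most `(|v| + |v₊| + 1)²` because
`0 ≤ 2 + γ ≤ 2`.
-/

open MeasureTheory ENNReal

noncomputable section

/-- `ℝ^d` as a Euclidean space. -/
abbrev Euc (d : ℕ) := EuclideanSpace ℝ (Fin d)

/-- Japanese bracket `⟨x⟩ = √(1+|x|²)`. -/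
def jap {d : ℕ} (x : Euc d) : ℝ := Real.sqrt (1 + ‖x‖^2)

/-- Fractional Sobolev seminorm squared `|f|²_{H^s(ℝ^d)}`, valued in `[0,∞]`. -/
def fracSobolevSq (d : ℕ) (s : ℝ) (f : Euc d → ℝ) : ℝ≥0∞ :=
  ∫⁻ x : Euc d, ∫⁻ y : Euc d, ENNReal.ofReal ((f x - f y)^2 / ‖x - y‖ ^ ((d : ℝ) + 2*s))

/-- Weighted normalized fractional Fisher information `I^N_{ν,γ}`, valued in `[0,∞]`. -/
def fisherInfo (d N : ℕ) (ν γ : ℝ) (G : (Fin N → Euc d) → ℝ) : ℝ≥0∞ :=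
  (N : ℝ≥0∞)⁻¹ * ∑ i : Fin N, ∫⁻ V : Fin N → Euc d, ∫⁻ w : Euc d,
    ENNReal.ofReal ((jap (V i) ^ (γ/2) * Real.sqrt (G V)
      - jap w ^ (γ/2) * Real.sqrt (G (Function.update V i w)))^2
      / ‖V i - w‖ ^ ((d : ℝ) + ν))

/-- A probability density: measurable, nonnegative, total mass one. -/
def IsProbDensity {α : Type*} [MeasureSpace α] (f : α → ℝ) : Prop :=
  Measurable f ∧ (∀ x, 0 ≤ f x) ∧ ∫⁻ x, ENNReal.ofReal (f x) = 1

/-- A symmetric (exchangeable) probability density on `(ℝ^d)^N`. -/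
def IsSymDensity (d N : ℕ) (F : (Fin N → Euc d) → ℝ) : Prop :=
  IsProbDensity F ∧ ∀ (σ : Equiv.Perm (Fin N)) (V : Fin N → Euc d), F (V ∘ σ) = F V

/-- Assumption (H) on the angular function `β`. -/
def AssumptionH (β : ℝ → ℝ) (ν K₁ K₂ : ℝ) : Prop :=
  Measurable β ∧ 0 < K₂ ∧ K₂ < K₁ ∧ (∀ θ ∈ Set.Ioc (0 : ℝ) Real.pi, 0 ≤ β θ) ∧
  ∀ θ ∈ Set.Ioc (0 : ℝ) Real.pi, K₂ * θ ^ (-1 - ν) ≤ β θ ∧ β θ ≤ K₁ * θ ^ (-1 - ν)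

/-- `β₀ = π ∫₀^π (1-cos θ) β(θ) dθ`. -/
def betaZero (β : ℝ → ℝ) : ℝ := Real.pi * ∫ θ in (0 : ℝ)..Real.pi, (1 - Real.cos θ) * β θ

/-- `G_ν(z) = inf{x ∈ (0,π] : ∫_x^π β ≤ z}`. -/
def Gnu (β : ℝ → ℝ) (z : ℝ) : ℝ :=
  sInf {x : ℝ | x ∈ Set.Ioc 0 Real.pi ∧ (∫ θ in x..Real.pi, β θ) ≤ z}

/-- Cross product on `ℝ³` (Euclidean). -/
def cross3 (x y : Euc 3) : Euc 3 :=
  (WithLp.equiv 2 (Fin 3 → ℝ)).symm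
    ![x 1 * y 2 - x 2 * y 1, x 2 * y 0 - x 0 * y 2, x 0 * y 1 - x 1 * y 0]

/-- The frame functions `I, J`: measurable, with `|I(X)| = |J(X)| = |X|` and
`(X/|X|, I(X)/|X|, J(X)/|X|)` a direct orthonormal basis, for every `X ≠ 0`. -/
def IsFrame (I J : Euc 3 → Euc 3) : Prop :=
  Measurable I ∧ Measurable J ∧
  ∀ X : Euc 3, X ≠ 0 →
    ‖I X‖ = ‖X‖ ∧ ‖J X‖ = ‖X‖ ∧
    inner ℝ X (I X) = 0 ∧ inner ℝ X (J X) = 0 ∧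
    inner ℝ (I X) (J X) = 0 ∧ cross3 X (I X) = ‖X‖ • J X

/-- `Γ(X,φ) = cos(φ) I(X) + sin(φ) J(X)`. -/
def GammaFrame (I J : Euc 3 → Euc 3) (X : Euc 3) (φ : ℝ) : Euc 3 :=
  Real.cos φ • I X + Real.sin φ • J X

/-- `a(v,v₊,θ,φ) = -((1-cos θ)/2)(v-v₊) + (sin θ/2) Γ(v-v₊,φ)`. -/
def aColl (I J : Euc 3 → Euc 3) (v vs : Euc 3) (θ φ : ℝ) : Euc 3 :=
  (-((1 - Real.cos θ)/2)) • (v - vs) + (Real.sin θ / 2) • GammaFrame I J (v - vs) φ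

/-- `c_{γ,ν}(v,v₊,z,φ) = a(v,v₊,G_ν(z/|v-v₊|^γ),φ)`. -/
def cColl (I J : Euc 3 → Euc 3) (β : ℝ → ℝ) (γ : ℝ) (v vs : Euc 3) (z φ : ℝ) : Euc 3 :=
  aColl I J v vs (Gnu β (z / ‖v - vs‖ ^ γ)) φ

/-- `K_γ(x) = |x|^γ x`. -/
def Kgam (γ : ℝ) (x : Euc 3) : Euc 3 := ‖x‖ ^ γ • x

/-- `Δ̃f(v,v₊,z,φ) = f(v+c) - f(v) - c·∇f(v)` with `c = c_{γ,ν}(v,v₊,z,φ)`. -/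
def tDelta (I J : Euc 3 → Euc 3) (β : ℝ → ℝ) (γ : ℝ) (f : Euc 3 → ℝ)
    (v vs : Euc 3) (z φ : ℝ) : ℝ :=
  f (v + cColl I J β γ v vs z φ) - f v
    - inner ℝ (cColl I J β γ v vs z φ) (gradient f v)

section NormRpow

open Real Set

variable {E : Type*} [NormedAddCommGroup E]

lemma rpow_sub_rpow_mul_le {q a b : ℝ} (hq : 0 ≤ q) (hb : 0 ≤ b) (hba : b ≤ a) :
    (a ^ q - b ^ q) * b ≤ q * a ^ q * (a - b) := by
  rcases hb.eq_or_lt with rfl | hb₀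
  · simp only [mul_zero, sub_zero]
    positivity
  rcases hba.eq_or_lt with rfl | hba'
  · simp
  obtain ⟨ξ, ⟨hbξ, hξa⟩, hξ⟩ := exists_hasDerivAt_eq_slope (fun x => x ^ q)
    (fun x => q * x ^ (q - 1)) hba' (continuousOn_id.rpow_const fun _ _ => Or.inr hq)
    fun x hx => hasDerivAt_rpow_const (Or.inl (hb₀.trans hx.1).ne')
  have hξ₀ : 0 < ξ := hb₀.trans hbξ
  have hqab : 0 ≤ q * (a - b) := mul_nonneg hq (sub_nonneg.2 hba)
  have hmvt : a ^ q - b ^ q = q * ξ ^ (q - 1) * (a - b) := by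
    rw [hξ, div_mul_cancel₀ _ (sub_pos.2 hba').ne']
  calc (a ^ q - b ^ q) * b = q * (a - b) * (ξ ^ (q - 1) * b) := by rw [hmvt]; ring
    _ ≤ q * (a - b) * (ξ ^ (q - 1) * ξ) := by gcongr
    _ = q * (a - b) * ξ ^ q := by rw [← rpow_add_one hξ₀.ne', sub_add_cancel]
    _ ≤ q * (a - b) * a ^ q := by gcongr
    _ = q * a ^ q * (a - b) := by ring

lemma norm_rpow_smul_sub_rpow_smul_le [NormedSpace ℝ E] {q : ℝ} (hq : 0 ≤ q) (a b : E) :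
    ‖‖a‖ ^ q • a - ‖b‖ ^ q • b‖ ≤ (1 + q) * max ‖a‖ ‖b‖ ^ q * ‖a - b‖ := by
  wlog h : ‖b‖ ≤ ‖a‖ generalizing a b
  · simpa only [norm_sub_rev, max_comm] using this b a (le_of_not_ge h)
  have hab : ‖a‖ ^ q • a - ‖b‖ ^ q • b = ‖a‖ ^ q • (a - b) + (‖a‖ ^ q - ‖b‖ ^ q) • b := by
    rw [smul_sub, sub_smul]; abel
  have hbq : ‖b‖ ^ q ≤ ‖a‖ ^ q := rpow_le_rpow (norm_nonneg b) h hq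
  rw [hab, max_eq_left h]
  calc ‖‖a‖ ^ q • (a - b) + (‖a‖ ^ q - ‖b‖ ^ q) • b‖
      ≤ ‖a‖ ^ q * ‖a - b‖ + (‖a‖ ^ q - ‖b‖ ^ q) * ‖b‖ := by
        refine (norm_add_le _ _).trans_eq ?_
        rw [norm_smul, norm_smul, norm_of_nonneg (by positivity),
          norm_of_nonneg (sub_nonneg.2 hbq)]
    _ ≤ ‖a‖ ^ q * ‖a - b‖ + q * ‖a‖ ^ q * ‖a - b‖ := by
        grw [rpow_sub_rpow_mul_le hq (norm_nonneg b) h, norm_sub_norm_le a b]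
    _ = (1 + q) * ‖a‖ ^ q * ‖a - b‖ := by ring

variable [InnerProductSpace ℝ E] [CompleteSpace E]

lemma hasGradientAt_norm_rpow {p : ℝ} (hp : 1 < p) (x : E) :
    HasGradientAt (fun w : E => ‖w‖ ^ p) ((p * ‖x‖ ^ (p - 2)) • x) x := by
  rw [hasGradientAt_iff_hasFDerivAt, map_smul]
  exact hasFDerivAt_norm_rpow x hp

lemma abs_norm_rpow_add_sub_sub_inner_gradient_le {k : ℝ} (hk : 2 ≤ k) (v c : E) :
    |‖v + c‖ ^ k - ‖v‖ ^ k - inner ℝ c (gradient (fun w : E => ‖w‖ ^ k) v)|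
      ≤ k * (k - 1) * (‖v‖ + ‖c‖) ^ (k - 2) * ‖c‖ ^ 2 := by
  have hk₁ : 1 < k := by linarith
  have hq : 0 ≤ k - 2 := by linarith
  set G : E → E := fun w => (k * ‖w‖ ^ (k - 2)) • w
  set L := k * (k - 1) * (‖v‖ + ‖c‖) ^ (k - 2) * ‖c‖ ^ 2
  have hderiv : ∀ t ∈ Icc (0 : ℝ) 1, HasDerivWithinAt
      (fun t : ℝ => ‖v + t • c‖ ^ k - t * inner ℝ (G v) c)
      (inner ℝ (G (v + t • c)) c - inner ℝ (G v) c) (Icc 0 1) t := by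
    intro t _
    have hline : HasDerivAt (fun t : ℝ => v + t • c) c t := by
      simpa using ((hasDerivAt_id t).smul_const c).const_add v
    exact (((hasGradientAt_norm_rpow hk₁ _).hasFDerivAt.comp_hasDerivAt t hline).sub
      (hasDerivAt_mul_const _)).hasDerivWithinAt
  have hbound : ∀ t ∈ Icc (0 : ℝ) 1,
      ‖inner ℝ (G (v + t • c)) c - inner ℝ (G v) c‖ ≤ L := by
    intro t ⟨ht₀, ht₁⟩
    have htc : ‖t • c‖ ≤ ‖c‖ := by
      rw [norm_smul, norm_of_nonneg ht₀]
      exact mul_le_of_le_one_left (norm_nonneg c) ht₁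
    have hmax : max ‖v + t • c‖ ‖v‖ ≤ ‖v‖ + ‖c‖ :=
      max_le ((norm_add_le _ _).trans (by linarith)) (by linarith [norm_nonneg c])
    have hG : ‖G (v + t • c) - G v‖ ≤ k * ((k - 1) * (‖v‖ + ‖c‖) ^ (k - 2) * ‖c‖) := by
      have hsmul : G (v + t • c) - G v
          = k • (‖v + t • c‖ ^ (k - 2) • (v + t • c) - ‖v‖ ^ (k - 2) • v) := by
        simp only [G, smul_sub, smul_smul]
      have hlip := norm_rpow_smul_sub_rpow_smul_le hq (v + t • c) v
      rw [add_sub_cancel_left, show 1 + (k - 2) = k - 1 by ring] at hlip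
      rw [hsmul, norm_smul, norm_of_nonneg (by linarith)]
      have hk₁' : 0 ≤ k - 1 := by linarith
      grw [hlip, hmax, htc]
    rw [← inner_sub_left, norm_eq_abs]
    calc |inner ℝ (G (v + t • c) - G v) c| ≤ ‖G (v + t • c) - G v‖ * ‖c‖ :=
          abs_real_inner_le_norm _ _
      _ ≤ k * ((k - 1) * (‖v‖ + ‖c‖) ^ (k - 2) * ‖c‖) * ‖c‖ := by gcongr
      _ = L := by ring
  have hmvt := (convex_Icc (0 : ℝ) 1).norm_image_sub_le_of_norm_hasDerivWithin_le hderiv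
    hbound (left_mem_Icc.2 zero_le_one) (right_mem_Icc.2 zero_le_one)
  rw [(hasGradientAt_norm_rpow hk₁ v).gradient, real_inner_comm]
  simpa [norm_eq_abs, sub_right_comm] using hmvt

end NormRpow

section RpowBounds

open Real

lemma add_add_one_rpow_le {k x y : ℝ} (hk : 1 ≤ k) (hx : 0 ≤ x) (hy : 0 ≤ y) :
    (x + y + 1) ^ k ≤ 3 ^ (k - 1) * (x ^ k + y ^ k + 1) := by
  simpa [Fin.sum_univ_three, add_assoc] using
    rpow_sum_le_const_mul_sum_rpow_of_nonneg Finset.univ (f := ![x, y, 1]) hk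
      (by simp [Fin.forall_fin_succ, hx, hy])

lemma add_two_mul_rpow_mul_rpow_le {k a x y d : ℝ} (hk : 2 ≤ k) (ha₀ : 0 ≤ a) (ha₂ : a ≤ 2)
    (hx : 0 ≤ x) (hy : 0 ≤ y) (hd₀ : 0 ≤ d) (hd : d ≤ x + y) :
    (x + 2 * d) ^ (k - 2) * d ^ a ≤ 3 ^ (k - 2) * 3 ^ (k - 1) * (x ^ k + y ^ k + 1) := by
  set R := x + y + 1
  have hR : 1 ≤ R := by linarith
  calc (x + 2 * d) ^ (k - 2) * d ^ a ≤ (3 * R) ^ (k - 2) * R ^ (2 : ℝ) := by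
        have hk₂ : 0 ≤ k - 2 := by linarith
        gcongr
        · linarith
        · exact (rpow_le_rpow hd₀ (by linarith) ha₀).trans (rpow_le_rpow_of_exponent_le hR ha₂)
    _ = 3 ^ (k - 2) * R ^ k := by
        rw [Real.mul_rpow (by norm_num) (by linarith), mul_assoc, ← Real.rpow_add (by linarith),
          sub_add_cancel]
    _ ≤ 3 ^ (k - 2) * 3 ^ (k - 1) * (x ^ k + y ^ k + 1) := by
        rw [mul_assoc]
        gcongr
        exact add_add_one_rpow_le (by linarith) hx hy

end RpowBounds

section TailIntegral

open Real Set MeasureTheory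

variable {T p : ℝ}

lemma min_one_div_rpow_eqOn_Ioc (hp : 0 ≤ p) :
    EqOn (fun z => min 1 ((T / z) ^ p)) 1 (Ioc 0 T) := fun _ hz =>
  min_eq_left (one_le_rpow ((one_le_div hz.1).2 hz.2) hp)

lemma min_one_div_rpow_eqOn_Ioi (hT : 0 < T) (hp : 0 ≤ p) :
    EqOn (fun z => min 1 ((T / z) ^ p)) (fun z => T ^ p * z ^ (-p)) (Ioi T) := fun z hz => by
  have hz₀ : 0 < z := hT.trans hz
  dsimp only
  rw [min_eq_right (rpow_le_one (by positivity) ((div_le_one hz₀).2 hz.le) hp),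
    div_rpow hT.le hz₀.le, rpow_neg hz₀.le, div_eq_mul_inv]

lemma integrableOn_Ioi_min_one_div_rpow (hT : 0 < T) (hp : 1 < p) :
    IntegrableOn (fun z => min 1 ((T / z) ^ p)) (Ioi 0) := by
  rw [← Ioc_union_Ioi_eq_Ioi hT.le]
  refine IntegrableOn.union ?_ ?_
  · exact (integrableOn_congr_fun (min_one_div_rpow_eqOn_Ioc (by linarith))
      measurableSet_Ioc).2 (integrableOn_const measure_Ioc_lt_top.ne)
  · exact (integrableOn_congr_fun (min_one_div_rpow_eqOn_Ioi hT (by linarith))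
      measurableSet_Ioi).2 ((integrableOn_Ioi_rpow_of_lt (by linarith) hT).const_mul _)

lemma integral_Ioi_min_one_div_rpow (hT : 0 < T) (hp : 1 < p) :
    ∫ z in Ioi 0, min 1 ((T / z) ^ p) = T * p / (p - 1) := by
  have hint := integrableOn_Ioi_min_one_div_rpow hT hp
  rw [← Ioc_union_Ioi_eq_Ioi hT.le] at hint ⊢
  rw [setIntegral_union (Ioc_disjoint_Ioi le_rfl) measurableSet_Ioi
      (hint.mono_set subset_union_left) (hint.mono_set subset_union_right),
    setIntegral_congr_fun measurableSet_Ioc (min_one_div_rpow_eqOn_Ioc (by linarith)),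
    setIntegral_congr_fun measurableSet_Ioi (min_one_div_rpow_eqOn_Ioi hT (by linarith)),
    integral_const_mul, integral_Ioi_rpow_of_lt (by linarith) hT]
  simp only [Pi.one_apply, setIntegral_const, smul_eq_mul, mul_one,
    Real.volume_real_Ioc_of_le hT.le, sub_zero]
  have hTT : T ^ p * T ^ (-p + 1) = T := by
    rw [← Real.rpow_add hT, add_neg_cancel_left, Real.rpow_one]
  have : -p + 1 ≠ 0 := by linarith
  have : p - 1 ≠ 0 := by linarith
  rw [mul_div_assoc', mul_neg, hTT]
  field_simp
  ring

lemma abs_setIntegral_Ioi_le_of_abs_le_min_one_rpow {g : ℝ → ℝ} {A : ℝ} (hT : 0 < T)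
    (hp : 1 < p) (hg : ∀ z > 0, |g z| ≤ A * min 1 ((T / z) ^ p)) :
    |∫ z in Ioi 0, g z| ≤ A * (T * p / (p - 1)) := by
  have hA : 0 ≤ A := by simpa [hT.ne'] using (abs_nonneg _).trans (hg T hT)
  by_cases hint : IntegrableOn g (Ioi 0)
  · rw [← integral_Ioi_min_one_div_rpow hT hp, ← integral_const_mul]
    exact (abs_integral_le_integral_abs).trans (setIntegral_mono_on hint.abs
      ((integrableOn_Ioi_min_one_div_rpow hT hp).const_mul A) measurableSet_Ioi hg)
  · rw [integral_undef hint, abs_zero]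
    have : 0 < p - 1 := by linarith
    positivity

end TailIntegral

section Collision

open Real Set

variable {I J : Euc 3 → Euc 3}

lemma norm_GammaFrame (hIJ : IsFrame I J) {X : Euc 3} (hX : X ≠ 0) (φ : ℝ) :
    ‖GammaFrame I J X φ‖ = ‖X‖ := by
  obtain ⟨hI, hJ, -, -, hIJ₀, -⟩ := hIJ.2.2 X hX
  have hsq : ‖GammaFrame I J X φ‖ ^ 2 = ‖X‖ ^ 2 := by
    rw [GammaFrame, norm_add_sq_real, norm_smul, norm_smul, inner_smul_left, inner_smul_right,
      hIJ₀, hI, hJ, norm_eq_abs, norm_eq_abs]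
    simp only [mul_pow, sq_abs, mul_zero, add_zero]
    linear_combination ‖X‖ ^ 2 * cos_sq_add_sin_sq φ
  exact (pow_left_inj₀ (norm_nonneg _) (norm_nonneg _) two_ne_zero).1 hsq

lemma norm_aColl_le (hIJ : IsFrame I J) {v vs : Euc 3} (hv : v ≠ vs) (θ φ : ℝ) :
    ‖aColl I J v vs θ φ‖ ≤ 2 * min 1 |θ| * ‖v - vs‖ := by
  have hcos : (1 - cos θ) / 2 ≤ min 1 |θ| := by
    have h := abs_cos_sub_cos_le 0 θ
    rw [cos_zero, zero_sub, abs_neg, abs_of_nonneg (by linarith [cos_le_one θ])] at h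
    exact le_min (by linarith [neg_one_le_cos θ]) (by linarith [abs_nonneg θ])
  have hsin : |sin θ| ≤ min 1 |θ| := le_min (abs_sin_le_one θ) abs_sin_le_abs
  have hΓ := norm_GammaFrame hIJ (sub_ne_zero.2 hv) φ
  calc ‖aColl I J v vs θ φ‖
      ≤ (1 - cos θ) / 2 * ‖v - vs‖ + |sin θ| / 2 * ‖GammaFrame I J (v - vs) φ‖ := by
        refine (norm_add_le _ _).trans_eq ?_
        simp only [norm_smul, norm_neg, norm_eq_abs, abs_div, abs_two,
          abs_of_nonneg (sub_nonneg.2 (cos_le_one θ))]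
    _ ≤ 2 * min 1 |θ| * ‖v - vs‖ := by
        have hX := norm_nonneg (v - vs)
        have hm : 0 ≤ min 1 |θ| := le_min zero_le_one (abs_nonneg θ)
        rw [hΓ]
        nlinarith [mul_le_mul_of_nonneg_right hcos hX, mul_le_mul_of_nonneg_right hsin hX,
          mul_nonneg hm hX]

end Collision

section Gnu

open Real Set MeasureTheory

variable {ν K₁ K₂ : ℝ}

lemma Gnu_nonneg (β : ℝ → ℝ) (z : ℝ) : 0 ≤ Gnu β z :=
  sInf_nonneg fun _ hx => hx.1.1.le

lemma Gnu_le_of_integral_le {β : ℝ → ℝ} {x z : ℝ} (hx : x ∈ Ioc 0 π)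
    (h : ∫ θ in x..π, β θ ≤ z) : Gnu β z ≤ x :=
  csInf_le ⟨0, fun _ hy => hy.1.1.le⟩ ⟨hx, h⟩

lemma Gnu_le_pi (β : ℝ → ℝ) {z : ℝ} (hz : 0 ≤ z) : Gnu β z ≤ π :=
  Gnu_le_of_integral_le ⟨pi_pos, le_rfl⟩ (by rwa [intervalIntegral.integral_same])

lemma AssumptionH.intervalIntegral_le {β : ℝ → ℝ} (hβ : AssumptionH β ν K₁ K₂) (hν : 0 < ν)
    {x : ℝ} (hx : x ∈ Ioc 0 π) : ∫ θ in x..π, β θ ≤ K₁ / ν * x ^ (-ν) := by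
  obtain ⟨hmeas, hK₂, hK₂₁, hβ₀, hβbd⟩ := hβ
  have hK₁ : 0 < K₁ := hK₂.trans hK₂₁
  have hmem : ∀ θ ∈ Icc x π, θ ∈ Ioc 0 π := fun θ hθ => ⟨hx.1.trans_le hθ.1, hθ.2⟩
  have hmaj : IntervalIntegrable (fun θ => K₁ * θ ^ (-1 - ν)) volume x π := by
    refine (continuousOn_const.mul fun θ hθ => ?_).intervalIntegrable
    rw [uIcc_of_le hx.2] at hθ
    exact (continuousAt_rpow_const θ _ (Or.inl (hmem θ hθ).1.ne')).continuousWithinAt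
  have hβint : IntervalIntegrable β volume x π := by
    refine hmaj.mono_fun hmeas.aestronglyMeasurable.restrict
      ((ae_restrict_iff' measurableSet_uIoc).2 (Filter.Eventually.of_forall fun θ hθ => ?_))
    rw [uIoc_of_le hx.2] at hθ
    have hθ' := hmem θ (Ioc_subset_Icc_self hθ)
    dsimp only
    rw [norm_of_nonneg (hβ₀ θ hθ'), norm_of_nonneg (by have := hθ'.1; positivity)]
    exact (hβbd θ hθ').2
  calc ∫ θ in x..π, β θ ≤ ∫ θ in x..π, K₁ * θ ^ (-1 - ν) :=
        intervalIntegral.integral_mono_on hx.2 hβint hmaj fun θ hθ => (hβbd θ (hmem θ hθ)).2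
    _ = K₁ / ν * (x ^ (-ν) - π ^ (-ν)) := by
        rw [intervalIntegral.integral_const_mul, integral_rpow (Or.inr ⟨by linarith,
          fun h => (not_le.2 hx.1) (by rw [uIcc_of_le hx.2] at h; exact h.1)⟩),
          show -1 - ν + 1 = -ν by ring]
        field_simp
        ring
    _ ≤ K₁ / ν * x ^ (-ν) := by
        have : 0 ≤ π ^ (-ν) := by positivity
        gcongr
        linarith

lemma AssumptionH.Gnu_le_rpow {β : ℝ → ℝ} (hβ : AssumptionH β ν K₁ K₂) (hν : 0 < ν)
    {z : ℝ} (hz : 0 < z) : Gnu β z ≤ (K₁ / (ν * z)) ^ (1 / ν) := by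
  have hK₁ : 0 < K₁ := hβ.2.1.trans hβ.2.2.1
  set x := (K₁ / (ν * z)) ^ (1 / ν)
  rcases le_or_gt x π with hxπ | hxπ
  · refine Gnu_le_of_integral_le ⟨by positivity, hxπ⟩ ((hβ.intervalIntegral_le hν
      ⟨by positivity, hxπ⟩).trans_eq ?_)
    rw [← rpow_mul (by positivity), show 1 / ν * -ν = -1 by field_simp, Real.rpow_neg_one,
      inv_div]
    field_simp
  · exact (Gnu_le_pi β hz.le).trans hxπ.le

end Gnu

section MomentBound

open Real Set MeasureTheory

variable {I J : Euc 3 → Euc 3}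

lemma abs_tDelta_norm_rpow_le (hIJ : IsFrame I J) {k : ℝ} (hk : 2 ≤ k) (β : ℝ → ℝ) (γ : ℝ)
    {v vs : Euc 3} (hv : v ≠ vs) (z φ : ℝ) :
    |tDelta I J β γ (fun w => ‖w‖ ^ k) v vs z φ| ≤ 4 * (k * (k - 1))
      * (‖v‖ + 2 * ‖v - vs‖) ^ (k - 2) * ‖v - vs‖ ^ 2
      * min 1 (Gnu β (z / ‖v - vs‖ ^ γ)) ^ 2 := by
  set θ := Gnu β (z / ‖v - vs‖ ^ γ)
  have hc := norm_aColl_le hIJ hv θ φ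
  rw [abs_of_nonneg (Gnu_nonneg β _)] at hc
  have hc₂ : ‖aColl I J v vs θ φ‖ ≤ 2 * ‖v - vs‖ := hc.trans (by
    gcongr
    exact mul_le_of_le_one_right zero_le_two (min_le_left 1 θ))
  have hk₁ : 0 ≤ k * (k - 1) := by nlinarith
  refine (abs_norm_rpow_add_sub_sub_inner_gradient_le hk v (aColl I J v vs θ φ)).trans ?_
  have hk₂ : 0 ≤ k - 2 := by linarith
  calc _ ≤ k * (k - 1) * (‖v‖ + 2 * ‖v - vs‖) ^ (k - 2) * (2 * min 1 θ * ‖v - vs‖) ^ 2 := by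
        gcongr
    _ = _ := by ring

lemma AssumptionH.min_one_Gnu_sq_le {β : ℝ → ℝ} {ν K₁ K₂ : ℝ} (hβ : AssumptionH β ν K₁ K₂)
    (hν : 0 < ν) {z s : ℝ} (hz : 0 < z) (hs : 0 < s) :
    min 1 (Gnu β (z / s)) ^ 2 ≤ min 1 ((K₁ * s / ν / z) ^ (2 / ν)) := by
  have hK₁ : 0 < K₁ := hβ.2.1.trans hβ.2.2.1
  have hθ := Gnu_nonneg β (z / s)
  refine le_min (pow_le_one₀ (le_min zero_le_one hθ) (min_le_left _ _)) ?_
  calc min 1 (Gnu β (z / s)) ^ 2 ≤ Gnu β (z / s) ^ 2 :=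
        pow_le_pow_left₀ (le_min zero_le_one hθ) (min_le_right _ _) 2
    _ ≤ ((K₁ / (ν * (z / s))) ^ (1 / ν)) ^ 2 := by
        gcongr
        exact hβ.Gnu_le_rpow hν (div_pos hz hs)
    _ = (K₁ * s / ν / z) ^ (2 / ν) := by
        rw [← Real.rpow_natCast, ← Real.rpow_mul (by positivity)]
        congr 1
        · field_simp
        · push_cast; ring

lemma AssumptionH.abs_intervalIntegral_tDelta_norm_rpow_le {β : ℝ → ℝ} {ν K₁ K₂ : ℝ}
    (hβ : AssumptionH β ν K₁ K₂) (hν : 0 < ν) (hIJ : IsFrame I J) {k : ℝ} (hk : 2 ≤ k) (γ : ℝ)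
    {v vs : Euc 3} (hv : v ≠ vs) {z : ℝ} (hz : 0 < z) :
    |∫ φ in (0 : ℝ)..(2 * π), tDelta I J β γ (fun w => ‖w‖ ^ k) v vs z φ|
      ≤ 4 * (k * (k - 1)) * (‖v‖ + 2 * ‖v - vs‖) ^ (k - 2) * ‖v - vs‖ ^ 2 * (2 * π)
        * min 1 ((K₁ * ‖v - vs‖ ^ γ / ν / z) ^ (2 / ν)) := by
  have hX : 0 < ‖v - vs‖ := norm_pos_iff.2 (sub_ne_zero.2 hv)
  have hk₁ : 0 ≤ k * (k - 1) := by nlinarith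
  have hφ : ∀ φ, ‖tDelta I J β γ (fun w => ‖w‖ ^ k) v vs z φ‖
      ≤ 4 * (k * (k - 1)) * (‖v‖ + 2 * ‖v - vs‖) ^ (k - 2) * ‖v - vs‖ ^ 2
        * min 1 ((K₁ * ‖v - vs‖ ^ γ / ν / z) ^ (2 / ν)) := fun φ =>
    (abs_tDelta_norm_rpow_le hIJ hk β γ hv z φ).trans
      (by gcongr; exact hβ.min_one_Gnu_sq_le hν hz (rpow_pos_of_pos hX γ))
  refine (intervalIntegral.norm_integral_le_of_norm_le_const fun φ _ => hφ φ).trans_eq ?_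
  rw [sub_zero, abs_of_pos two_pi_pos]
  ring

end MomentBound

/-- for every `k ≥ 2` there is `C = C(k,γ,ν,K₁)` such that for `v ≠ v₊`,
`|∫₀^∞ ∫₀^{2π} Δ̃(|·|^k)(v,v₊,z,φ) dφ dz| ≤ C (|v|^k + |v₊|^k + 1)`. -/
theorem stmt_6 (γ ν K₁ K₂ : ℝ) (hγ : γ ∈ Set.Ioo (-2 : ℝ) 0) (hν : ν ∈ Set.Ioo (0 : ℝ) 2)
    (β : ℝ → ℝ) (hβ : AssumptionH β ν K₁ K₂)
    (I J : Euc 3 → Euc 3) (hIJ : IsFrame I J)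
    (k : ℝ) (hk : 2 ≤ k) :
    ∃ C > (0 : ℝ), ∀ v vs : Euc 3, v ≠ vs →
      |∫ z in Set.Ioi (0 : ℝ), (∫ φ in (0 : ℝ)..(2*Real.pi),
          tDelta I J β γ (fun w => ‖w‖ ^ k) v vs z φ)|
        ≤ C * (‖v‖ ^ k + ‖vs‖ ^ k + 1) := by
  obtain ⟨hγ₂, hγ₀⟩ := hγ
  obtain ⟨hν₀, hν₂⟩ := hν
  have hK₁ : 0 < K₁ := hβ.2.1.trans hβ.2.2.1
  have hk₁ : 0 < k * (k - 1) := by nlinarith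
  have h2ν : 0 < 2 - ν := by linarith
  refine ⟨16 * Real.pi * K₁ / (ν * (2 - ν)) * (k * (k - 1)) * (3 ^ (k - 2) * 3 ^ (k - 1)),
    by positivity, fun v vs hv => ?_⟩
  set d := ‖v - vs‖
  have hd : 0 < d := norm_pos_iff.2 (sub_ne_zero.2 hv)
  calc _ ≤ _ := abs_setIntegral_Ioi_le_of_abs_le_min_one_rpow (by positivity)
        (by rw [lt_div_iff₀ hν₀]; linarith)
        fun z hz => hβ.abs_intervalIntegral_tDelta_norm_rpow_le hν₀ hIJ hk γ hv hz
    _ = 16 * Real.pi * K₁ / (ν * (2 - ν)) * (k * (k - 1))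
        * ((‖v‖ + 2 * d) ^ (k - 2) * d ^ (2 + γ)) := by
        rw [Real.rpow_add hd, Real.rpow_two]
        field_simp
        ring
    _ ≤ _ := by
        rw [mul_assoc _ (3 ^ (k - 2) * 3 ^ (k - 1))]
        exact mul_le_mul_of_nonneg_left (add_two_mul_rpow_mul_rpow_le hk (by linarith)
          (by linarith) (norm_nonneg v) (norm_nonneg vs) hd.le (norm_sub_le v vs))
          (by positivity)

end
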